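/- Let C be a small category satisfying (C1), (C2) and (C3), and let ℓ : C^op → Sh(C^op, J_at) be the composite of the Yoneda embedding with sheafification. Let a be an atom of Sh(C^op, J_at), let n be an object of C^op, and let f : ℓ(n) → a be a morphism. Then there exist a morphism g : n → m in C^op, a subgroup G of the automorphism group of m in C^op, and an isomorphism h : ℓ(m)∕G ≅ a, such that f equals the composite of ℓ(g), the canonical quotient map ℓ(m) → ℓ(m)∕G, and h; here ℓ(m)∕G denotes the colimit in Sh(C^op, J_at) of the diagram given by the automorphisms ℓ(σ) for σ ∈ G acting on ℓ(m) (the common coequalizer of all pairs (ℓ(σ), id)). -/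

import Mathlib

open CategoryTheory Limits Opposite

universe w v u

/-- A chain indexed by a preorder stabilizes if there is an index from which on
all the morphisms of the chain are isomorphisms. -/
def ChainStabilizes {J : Type w} [Preorder J] {C : Type u} [Category.{v} C]
    (F : J ⥤ C) : Prop :=
  ∃ i : J, ∀ j : J, ∀ h : i ≤ j, IsIso (F.map (homOfLE h))

/-- A category is co-well-founded if every chain indexed by a (nonempty) well-ordered
poset stabilizes. -/
def CoWellFounded (C : Type u) [Category.{v} C] : Prop :=
  ∀ (J : Type w) (_ : LinearOrder J) (_ : WellFoundedLT J) (_ : Nonempty J)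
    (F : J ⥤ C), ChainStabilizes F

/-- An object is finitely presentable if its covariant Hom functor preserves
filtered colimits. -/
def IsFinitelyPresentableObj {C : Type u} [Category.{v} C] (X : C) : Prop :=
  ∀ (J : Type w) (_ : SmallCategory J) (_ : IsFiltered J),
    Nonempty (PreservesColimitsOfShape J (coyoneda.obj (op X)))

/-- A category is locally finitely presentable if it is cocomplete and there is a small
family of finitely presentable objects such that every object is a filtered colimit of
objects of this family. -/
def LocallyFinitelyPresentable (C : Type u) [Category.{v} C] : Prop :=
  HasColimitsOfSize.{w, w} C ∧
  ∃ (ι : Type w) (G : ι → C),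
    (∀ i, IsFinitelyPresentableObj.{w} (G i)) ∧
    ∀ X : C, ∃ (J : Type w) (_ : SmallCategory J) (_ : IsFiltered J) (D : J ⥤ C)
      (c : Cocone D), Nonempty (IsColimit c) ∧ Nonempty (c.pt ≅ X) ∧
      ∀ j : J, ∃ i : ι, Nonempty (D.obj j ≅ G i)

/-- An atom of a topos: an object which is not initial and whose only subobjects are
the initial one and itself. -/
def IsAtomObj {C : Type u} [Category.{v} C] [HasInitial C] (X : C) : Prop :=
  (¬ Nonempty (X ≅ ⊥_ C)) ∧
  ∀ S : Subobject X, Nonempty ((S : C) ≅ ⊥_ C) ∨ S = ⊤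

/-- A category has amalgamation (the left Ore condition) if every span admits a cocone. -/
def HasAmalgamation (C : Type u) [Category.{v} C] : Prop :=
  ∀ {X A B : C} (f : X ⟶ A) (g : X ⟶ B), ∃ (W : C) (h : A ⟶ W) (k : B ⟶ W), f ≫ h = g ≫ k

/-- `J` is the atomic topology: its covering sieves are exactly the nonempty sieves. -/
def IsAtomicTopology {C : Type u} [Category.{v} C] (J : GrothendieckTopology C) : Prop :=
  ∀ (X : C) (S : Sieve X), S ∈ J X ↔ ∃ (Y : C) (f : Y ⟶ X), S f

/-- Condition (C2'): for every pullback square `X∩Y → X → Z`, `X∩Y → Y → Z` and every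
pair `u, v : Z ⇉ A` agreeing on `X∩Y`, there are `w : A → A'` and a finite sequence of
morphisms `Z → A'` from `u ≫ w` to `v ≫ w` in which consecutive morphisms agree on `X`
or on `Y`. -/
def CondC2' (C : Type u) [Category.{v} C] : Prop :=
  ∀ {W X Y Z : C} (fst : W ⟶ X) (snd : W ⟶ Y) (f : X ⟶ Z) (g : Y ⟶ Z),
    IsPullback fst snd f g →
    ∀ {A : C} (u v : Z ⟶ A), (fst ≫ f) ≫ u = (fst ≫ f) ≫ v →
      ∃ (A' : C) (w : A ⟶ A') (n : ℕ) (k : Fin (n + 1) → (Z ⟶ A')),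
        k 0 = u ≫ w ∧ k (Fin.last n) = v ≫ w ∧
        ∀ i : Fin n, f ≫ k i.castSucc = f ≫ k i.succ ∨ g ≫ k i.castSucc = g ≫ k i.succ
universe v₂ u₂

/-- The composite of the Yoneda embedding `Cᵒᵖ ⥤ (Cᵒᵖᵒᵖ ⥤ Type u)` with sheafification
for a topology `J` on `Cᵒᵖ`. -/
noncomputable def atomicYoneda {C : Type u} [SmallCategory C]
    (J : GrothendieckTopology Cᵒᵖ) : Cᵒᵖ ⥤ Sheaf J (Type u) :=
  yoneda ⋙ presheafToSheaf J (Type u)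

instance sheafTypeHasInitial {C : Type u} [SmallCategory C] (J : GrothendieckTopology Cᵒᵖ) :
    HasInitial (Sheaf J (Type u)) := by
  have : HasColimitsOfSize.{0, 0} (Sheaf J (Type u)) := inferInstance
  exact HasColimitsOfSize.has_colimits_of_shape _

/-- Condition (C1): the composite of Yoneda with sheafification is fully faithful and
sends every object of `Cᵒᵖ` to an atom. -/
def CondC1 {C : Type u} [SmallCategory C] (J : GrothendieckTopology Cᵒᵖ) : Prop :=
  Nonempty (atomicYoneda J).FullyFaithful ∧
  ∀ n : Cᵒᵖ, IsAtomObj ((atomicYoneda J).obj n)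

/-- Condition (C2): `Cᵒᵖ` has pushouts and the composite of Yoneda with sheafification
preserves them. -/
def CondC2 {C : Type u} [SmallCategory C] (J : GrothendieckTopology Cᵒᵖ) : Prop :=
  HasPushouts Cᵒᵖ ∧
  ∀ {W X Y Z : Cᵒᵖ} (f : W ⟶ X) (g : W ⟶ Y) (inl : X ⟶ Z) (inr : Y ⟶ Z),
    IsPushout f g inl inr →
    IsPushout ((atomicYoneda J).map f) ((atomicYoneda J).map g)
      ((atomicYoneda J).map inl) ((atomicYoneda J).map inr)

/-- Condition (C3): `C` is well-founded, i.e. `Cᵒᵖ` is co-well-founded. -/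
def CondC3 (C : Type u) [SmallCategory C] : Prop :=
  CoWellFounded.{u} Cᵒᵖ

/-- Condition (C4): the automorphism group of every object of `C` is Noetherian: every
ascending chain of subgroups stabilizes. -/
def CondC4 (C : Type u) [SmallCategory C] : Prop :=
  ∀ X : C, ∀ c : ℕ → Subgroup (Aut X), Monotone c → ∃ N, ∀ n, N ≤ n → c n = c N

/-- `π : L.obj m ⟶ Q` exhibits `Q` as the quotient of `L.obj m` by the subgroup
`G ⊆ Aut m`, i.e. as the common coequalizer of all the pairs `(L.map σ, id)`, `σ ∈ G`. -/
def IsGroupQuotientAlong {C : Type u} [Category.{v} C] {D : Type u₂} [Category.{v₂} D]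
    (L : C ⥤ D) {m : C} (G : Subgroup (Aut m)) {Q : D} (π : L.obj m ⟶ Q) : Prop :=
  (∀ σ ∈ G, L.map σ.hom ≫ π = π) ∧
  ∀ (Q' : D) (π' : L.obj m ⟶ Q'), (∀ σ ∈ G, L.map σ.hom ≫ π' = π') →
    ∃! t : Q ⟶ Q', π ≫ t = π'


/-! ### Auxiliary machinery for `stmt5` -/

namespace Stmt5Aux

variable {C : Type u} [SmallCategory C] (J : GrothendieckTopology Cᵒᵖ)

/-- The equivalence between morphisms `ℓ(d) ⟶ F` and sections of `F` over `d`. -/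
noncomputable def ε (F : Sheaf J (Type u)) (d : Cᵒᵖ) :
    ((atomicYoneda J).obj d ⟶ F) ≃ F.val.obj (op d) :=
  ((sheafificationAdjunction J (Type u)).homEquiv (yoneda.obj d) F).trans yonedaEquiv

lemma ε_comp {F F' : Sheaf J (Type u)} {d : Cᵒᵖ} (s : (atomicYoneda J).obj d ⟶ F) (φ : F ⟶ F') :
    ε J F' d (s ≫ φ) = φ.hom.app (op d) (ε J F d s) := by
  simp only [ε, Equiv.trans_apply, Adjunction.homEquiv_naturality_right]
  exact (congrArg yonedaEquiv
    ((sheafificationAdjunction J (Type u)).homEquiv_naturality_right s φ)).trans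
    (yonedaEquiv_comp _ _)

variable {J}

lemma sep {Q' : Sheaf J (Type u)} {d : Cᵒᵖ} (T : Sieve d) (hT : T ∈ J d)
    (q₁ q₂ : Q'.val.obj (op d))
    (h : ∀ (e : Cᵒᵖ) (w : e ⟶ d), T w → Q'.val.map w.op q₁ = Q'.val.map w.op q₂) :
    q₁ = q₂ := by
  have hQ := (isSheaf_iff_isSheaf_of_type J Q'.val).mp Q'.cond
  exact (hQ T hT).isSeparatedFor (fun e w hw => Q'.val.map w.op q₁) q₁ q₂
    (fun e w hw => rfl) (fun e w hw => (h e w hw).symm)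

lemma key (FF : (atomicYoneda J).FullyFaithful) {m : Cᵒᵖ} {a Q' : Sheaf J (Type u)}
    (π : (atomicYoneda J).obj m ⟶ a) (π' : (atomicYoneda J).obj m ⟶ Q')
    (hstar : ∀ (k : Cᵒᵖ) (u v : k ⟶ m),
      (atomicYoneda J).map u ≫ π = (atomicYoneda J).map v ≫ π →
      (atomicYoneda J).map u ≫ π' = (atomicYoneda J).map v ≫ π')
    {z : Cᵒᵖ} (x y : ((atomicYoneda J).obj m).val.obj (op z))
    (h : π.hom.app (op z) x = π.hom.app (op z) y) :
    π'.hom.app (op z) x = π'.hom.app (op z) y := by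
  set σx := (ε J ((atomicYoneda J).obj m) z).symm x with hσx
  set σy := (ε J ((atomicYoneda J).obj m) z).symm y with hσy
  have h1 : σx ≫ π = σy ≫ π := by
    apply (ε J a z).injective
    rw [ε_comp, ε_comp, Equiv.apply_symm_apply, Equiv.apply_symm_apply]
    exact h
  have h2 : (atomicYoneda J).map (FF.preimage σx) ≫ π
      = (atomicYoneda J).map (FF.preimage σy) ≫ π := by
    rw [FF.map_preimage, FF.map_preimage]; exact h1
  have h3 := hstar z _ _ h2
  rw [FF.map_preimage, FF.map_preimage] at h3
  calc π'.hom.app (op z) x = ε J Q' z (σx ≫ π') := by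
        rw [ε_comp, Equiv.apply_symm_apply]
    _ = ε J Q' z (σy ≫ π') := by rw [h3]
    _ = π'.hom.app (op z) y := by rw [ε_comp, Equiv.apply_symm_apply]

/-- The descent lemma: a locally surjective morphism `π : ℓ(m) ⟶ a` has the universal
property with respect to any `π'` which coequalizes every pair coequalized by `π`. -/
lemma descent (FF : (atomicYoneda J).FullyFaithful) {m : Cᵒᵖ} {a Q' : Sheaf J (Type u)}
    (π : (atomicYoneda J).obj m ⟶ a) (π' : (atomicYoneda J).obj m ⟶ Q')
    [Sheaf.IsLocallySurjective π]
    (hstar : ∀ (k : Cᵒᵖ) (u v : k ⟶ m),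
      (atomicYoneda J).map u ≫ π = (atomicYoneda J).map v ≫ π →
      (atomicYoneda J).map u ≫ π' = (atomicYoneda J).map v ≫ π') :
    ∃ t : a ⟶ Q', π ≫ t = π' := by
  have hkey : ∀ {z : Cᵒᵖ} (x y : ((atomicYoneda J).obj m).val.obj (op z)),
      π.hom.app (op z) x = π.hom.app (op z) y →
      π'.hom.app (op z) x = π'.hom.app (op z) y :=
    fun x y h => key FF π π' hstar x y h
  have hQ := (isSheaf_iff_isSheaf_of_type J Q'.val).mp Q'.cond
  have hLS : ∀ {d : Cᵒᵖ} (s : a.val.obj (op d)), Presheaf.imageSieve π.hom s ∈ J d :=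
    fun s => Presheaf.imageSieve_mem J π.hom s
  have hlp : ∀ {U : Cᵒᵖᵒᵖ} (s : a.val.obj U) {V : Cᵒᵖ} (g : V ⟶ U.unop)
      (hg : Presheaf.imageSieve π.hom s g),
      π.hom.app (op V) (Presheaf.localPreimage π.hom s g hg) = a.val.map g.op s :=
    fun {U} s {V} g hg => Presheaf.app_localPreimage π.hom s g hg
  have exU : ∀ {d : Cᵒᵖ} (s : a.val.obj (op d)), ∃! t : Q'.val.obj (op d),
      ∀ (e : Cᵒᵖ) (w : e ⟶ d) (hw : Presheaf.imageSieve π.hom s w),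
        Q'.val.map w.op t = π'.hom.app (op e) (Presheaf.localPreimage π.hom s w hw) := by
    intro d s
    have compat : Presieve.FamilyOfElements.Compatible
        (fun e w hw => π'.hom.app (op e) (Presheaf.localPreimage π.hom s w hw) :
          Presieve.FamilyOfElements Q'.val (Presheaf.imageSieve π.hom s).arrows) := by
      intro e₁ e₂ z g₁ g₂ w₁ w₂ h₁ h₂ comm
      rw [← FunctorToTypes.naturality, ← FunctorToTypes.naturality]
      apply hkey
      rw [FunctorToTypes.naturality, FunctorToTypes.naturality]
      rw [hlp s w₁ h₁, hlp s w₂ h₂]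
      rw [← FunctorToTypes.map_comp_apply, ← FunctorToTypes.map_comp_apply,
        ← op_comp, ← op_comp, comm]
    obtain ⟨t, ht, huniq⟩ := hQ _ (hLS s) _ compat
    exact ⟨t, fun e w hw => ht w hw, fun t' ht' => huniq t' (fun e w hw => ht' _ w hw)⟩
  refine ⟨⟨{ app := fun d => TypeCat.ofHom fun s => (exU (d := d.unop) s).choose
             naturality := ?_ }⟩, ?_⟩
  · intro d₁ d₂ v
    ext s
    show (exU (a.val.map v s)).choose = Q'.val.map v (exU s).choose
    apply sep ((Presheaf.imageSieve π.hom (a.val.map v s)) ⊓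
      (Presheaf.imageSieve π.hom s).pullback v.unop)
      (J.intersection_covering (hLS _) (J.pullback_stable _ (hLS _)))
    rintro e w ⟨hw1, hw2⟩
    rw [(exU (a.val.map v s)).choose_spec.1 e w hw1]
    rw [← FunctorToTypes.map_comp_apply]
    have : v ≫ w.op = (w ≫ v.unop).op := rfl
    rw [this, (exU s).choose_spec.1 e (w ≫ v.unop) hw2]
    apply hkey
    rw [hlp _ w hw1, hlp s (w ≫ v.unop) hw2]
    rw [← FunctorToTypes.map_comp_apply, this]
  · apply Sheaf.hom_ext
    apply NatTrans.ext
    ext d x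
    show (exU (π.hom.app d x)).choose = π'.hom.app d x
    apply sep (Presheaf.imageSieve π.hom (π.hom.app d x)) (hLS _)
    intro e w hw
    rw [(exU (π.hom.app d x)).choose_spec.1 e w hw]
    rw [← FunctorToTypes.naturality]
    apply hkey
    rw [hlp _ w hw]
    rw [FunctorToTypes.naturality]

/-- For the atomic topology, the empty presheaf is a sheaf. -/
def emptySheaf (hJ : IsAtomicTopology J) : Sheaf J (Type u) :=
  ⟨(Functor.const Cᵒᵖᵒᵖ).obj PEmpty.{u+1}, by
    rw [isSheaf_iff_isSheaf_of_type]
    intro X S hS x hx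
    obtain ⟨Y, g, hg⟩ := (hJ X S).mp hS
    exact (x g hg).elim⟩

noncomputable def emptySheafInitial (hJ : IsAtomicTopology J) :
    IsInitial (emptySheaf hJ) :=
  IsInitial.ofUniqueHom
    (fun Y => ⟨{ app := fun d => TypeCat.ofHom fun (x : PEmpty) => x.elim
                 naturality := fun d d' g => by ext (x : PEmpty); exact x.elim }⟩)
    (fun Y mm => by
      apply Sheaf.hom_ext
      apply NatTrans.ext
      ext d (x : PEmpty)
      exact x.elim)

/-- The initial sheaf is strict: anything mapping to an initial sheaf is initial. -/
noncomputable def isInitialOfHom (hJ : IsAtomicTopology J) {X B : Sheaf J (Type u)}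
    (hB : IsInitial B) (w : X ⟶ B) : IsInitial X := by
  have w' : X ⟶ emptySheaf hJ := w ≫ hB.to _
  exact IsInitial.ofUniqueHom
    (fun Y => ⟨{ app := fun d => TypeCat.ofHom fun x => PEmpty.elim (w'.hom.app d x)
                 naturality := fun d d' g => by ext x; exact PEmpty.elim (w'.hom.app d x) }⟩)
    (fun Y mm => by
      apply Sheaf.hom_ext
      apply NatTrans.ext
      ext d x
      exact PEmpty.elim (w'.hom.app d x))

/-- Any morphism from a non-initial sheaf to an atom is an epimorphism. -/
lemma epi_of_to_atom (hJ : IsAtomicTopology J) {X a : Sheaf J (Type u)}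
    (hX : ¬ Nonempty (X ≅ ⊥_ (Sheaf J (Type u)))) (ha : IsAtomObj a) (w : X ⟶ a) :
    Epi w := by
  rcases ha.2 (Subobject.mk (image.ι w)) with h | h
  · exfalso
    obtain ⟨i⟩ := h
    have hinit : IsInitial (image w) :=
      IsInitial.ofIso (IsInitial.ofIso initialIsInitial i.symm)
        (Subobject.underlyingIso (image.ι w))
    exact hX ⟨(isInitialOfHom hJ hinit (factorThruImage w)).uniqueUpToIso initialIsInitial⟩
  · haveI : IsIso (image.ι w) := by
      rw [Subobject.isIso_iff_mk_eq_top]; exact h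
    rw [← image.fac w]
    exact epi_comp _ _

/-- Existence of a maximal factorization of `f` through sheafified representables,
using well-foundedness. -/
lemma exists_maximal_fact (h3 : CondC3 C) {a : Sheaf J (Type u)} {n : Cᵒᵖ}
    (f : (atomicYoneda J).obj n ⟶ a) :
    ∃ (m : Cᵒᵖ) (g : n ⟶ m) (π : (atomicYoneda J).obj m ⟶ a),
      (atomicYoneda J).map g ≫ π = f ∧
      ∀ (m' : Cᵒᵖ) (g' : m ⟶ m') (π' : (atomicYoneda J).obj m' ⟶ a),
        (atomicYoneda J).map g' ≫ π' = π → IsIso g' := by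
  by_contra hcon
  have step : ∀ (m : Cᵒᵖ) (g : n ⟶ m) (π : (atomicYoneda J).obj m ⟶ a),
      (atomicYoneda J).map g ≫ π = f →
      ∃ (m' : Cᵒᵖ) (g' : m ⟶ m') (π' : (atomicYoneda J).obj m' ⟶ a),
        (atomicYoneda J).map g' ≫ π' = π ∧ ¬ IsIso g' := by
    intro m g π hfac
    by_contra hm
    push_neg at hm
    exact hcon ⟨m, g, π, hfac, hm⟩
  letI T := Σ' (m : Cᵒᵖ) (g : n ⟶ m) (π : (atomicYoneda J).obj m ⟶ a),
    (atomicYoneda J).map g ≫ π = f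
  choose m' g' π' hfac' hni using fun (x : T) => step x.1 x.2.1 x.2.2.1 x.2.2.2
  let nextT : T → T := fun x => ⟨m' x, x.2.1 ≫ g' x, π' x, by
    rw [Functor.map_comp, Category.assoc, hfac' x]; exact x.2.2.2⟩
  let seq : ℕ → T := fun k => Nat.rec (⟨n, 𝟙 n, f, by simp⟩ : T) (fun _ ih => nextT ih) k
  let ch : ∀ k : ℕ, (seq k).1 ⟶ (seq (k+1)).1 := fun k => g' (seq k)
  let F0 : ℕ ⥤ Cᵒᵖ := Functor.ofSequence ch
  have mono : Monotone (fun x : ULift.{u} ℕ => x.down) := fun _ _ h => h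
  haveI hWF : WellFoundedLT (ULift.{u} ℕ) := by
    constructor
    have : ((· < ·) : ULift.{u} ℕ → ULift.{u} ℕ → Prop) = InvImage (· < ·) ULift.down := by
      funext a b
      exact propext ⟨fun h => h, fun h => h⟩
    rw [this]
    exact InvImage.wf ULift.down (IsWellFounded.wf)
  obtain ⟨i, hi⟩ := h3 (ULift.{u} ℕ) inferInstance hWF ⟨⟨0⟩⟩ (mono.functor ⋙ F0)
  have hle : i ≤ ⟨i.down + 1⟩ := Nat.le_succ i.down
  have hiso := hi ⟨i.down + 1⟩ hle
  rw [show (mono.functor ⋙ F0).map (homOfLE hle) = F0.map (homOfLE (Nat.le_succ i.down)) from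
    congrArg F0.map (Subsingleton.elim (mono.functor.map (homOfLE hle))
      (homOfLE (Nat.le_succ i.down))), Functor.ofSequence_map_homOfLE_succ] at hiso
  exact hni (seq i.down) hiso

end Stmt5Aux

/-- under (C1), (C2), (C3), every morphism `ℓ(n) → a` to an atom factors as
`ℓ(n) → ℓ(m) → ℓ(m)∕G ≅ a` for some representable atom `m` and subgroup `G ⊆ Aut(m)`. -/
theorem stmt5 {C : Type u} [SmallCategory C] (J : GrothendieckTopology Cᵒᵖ)
    (hJ : IsAtomicTopology J)
    (h1 : CondC1 J) (h2 : CondC2 J) (h3 : CondC3 C)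
    (a : Sheaf J (Type u)) (ha : IsAtomObj a)
    (n : Cᵒᵖ) (f : (atomicYoneda J).obj n ⟶ a) :
    ∃ (m : Cᵒᵖ) (g : n ⟶ m) (G : Subgroup (Aut m)) (Q : Sheaf J (Type u))
      (π : (atomicYoneda J).obj m ⟶ Q) (h : Q ≅ a),
      IsGroupQuotientAlong (atomicYoneda J) G π ∧
      f = (atomicYoneda J).map g ≫ π ≫ h.hom := by
  classical
  obtain ⟨FF⟩ := h1.1
  haveI hpo : HasPushouts Cᵒᵖ := h2.1
  obtain ⟨m, g, π, hfac, hmax⟩ := Stmt5Aux.exists_maximal_fact h3 f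
  have hepi : Epi π := Stmt5Aux.epi_of_to_atom hJ (h1.2 m).1 ha π
  -- the crucial consequence of maximality
  have crux : ∀ (k : Cᵒᵖ) (u v : k ⟶ m),
      (atomicYoneda J).map u ≫ π = (atomicYoneda J).map v ≫ π →
      ∃ σ : Aut m, ((atomicYoneda J).map σ.hom ≫ π = π) ∧ u ≫ σ.hom = v := by
    intro k u v h
    have hp : IsPushout u v (pushout.inl u v) (pushout.inr u v) := IsPushout.of_hasPushout u v
    have hp' := h2.2 u v _ _ hp
    have hq1 : (atomicYoneda J).map (pushout.inl u v) ≫ hp'.desc π π h = π :=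
      hp'.inl_desc π π h
    have hq2 : (atomicYoneda J).map (pushout.inr u v) ≫ hp'.desc π π h = π :=
      hp'.inr_desc π π h
    haveI hisol : IsIso (pushout.inl u v) := hmax _ _ _ hq1
    haveI hisor : IsIso (pushout.inr u v) := hmax _ _ _ hq2
    refine ⟨(asIso (pushout.inl u v)) ≪≫ (asIso (pushout.inr u v)).symm, ?_, ?_⟩
    · show (atomicYoneda J).map (pushout.inl u v ≫ inv (pushout.inr u v)) ≫ π = π
      have hinv : (atomicYoneda J).map (inv (pushout.inr u v)) ≫ π = hp'.desc π π h := by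
        calc (atomicYoneda J).map (inv (pushout.inr u v)) ≫ π
            = (atomicYoneda J).map (inv (pushout.inr u v)) ≫
              ((atomicYoneda J).map (pushout.inr u v) ≫ hp'.desc π π h) := by rw [hq2]
          _ = hp'.desc π π h := by
            rw [← Category.assoc, ← Functor.map_comp, IsIso.inv_hom_id,
              CategoryTheory.Functor.map_id, Category.id_comp]
      rw [Functor.map_comp, Category.assoc, hinv, hq1]
    · show u ≫ (pushout.inl u v ≫ inv (pushout.inr u v)) = v
      rw [← Category.assoc, pushout.condition]
      simp
  -- the subgroup
  let G : Subgroup (Aut m) :=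
    { carrier := {σ : Aut m | (atomicYoneda J).map σ.hom ≫ π = π}
      one_mem' := by
        show (atomicYoneda J).map (𝟙 m) ≫ π = π
        rw [CategoryTheory.Functor.map_id, Category.id_comp]
      mul_mem' := by
        intro σ τ hσ hτ
        show (atomicYoneda J).map (τ.hom ≫ σ.hom) ≫ π = π
        rw [Functor.map_comp, Category.assoc]
        rw [show (atomicYoneda J).map σ.hom ≫ π = π from hσ]
        exact hτ
      inv_mem' := by
        intro σ hσ
        show (atomicYoneda J).map σ.inv ≫ π = π
        have hσ' : (atomicYoneda J).map σ.hom ≫ π = π := hσ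
        calc (atomicYoneda J).map σ.inv ≫ π
            = (atomicYoneda J).map σ.inv ≫ (atomicYoneda J).map σ.hom ≫ π := by rw [hσ']
          _ = π := by
            rw [← Category.assoc, ← Functor.map_comp,
              show σ.inv ≫ σ.hom = 𝟙 m from Iso.inv_hom_id (σ : m ≅ m),
              CategoryTheory.Functor.map_id, Category.id_comp] }
  have hmemG : ∀ σ : Aut m, σ ∈ G ↔ (atomicYoneda J).map σ.hom ≫ π = π := fun σ => Iff.rfl
  refine ⟨m, g, G, a, π, Iso.refl a, ⟨fun σ hσ => (hmemG σ).mp hσ, ?_⟩, ?_⟩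
  · -- universal property of the quotient
    intro Q' π' hinv
    have hstar : ∀ (k : Cᵒᵖ) (u v : k ⟶ m),
        (atomicYoneda J).map u ≫ π = (atomicYoneda J).map v ≫ π →
        (atomicYoneda J).map u ≫ π' = (atomicYoneda J).map v ≫ π' := by
      intro k u v h
      obtain ⟨σ, hσ, huv⟩ := crux k u v h
      rw [← huv, Functor.map_comp, Category.assoc, hinv σ ((hmemG σ).mpr hσ)]
    haveI : Sheaf.IsLocallySurjective π :=
      (Sheaf.isLocallySurjective_iff_epi' (A := Type u) π).mpr hepi
    obtain ⟨t, ht⟩ := Stmt5Aux.descent FF π π' hstar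
    exact ⟨t, ht, fun t' ht' => (cancel_epi π).mp (by rw [ht, ht'])⟩
  · rw [Iso.refl_hom, Category.comp_id]
    exact hfac.symm
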